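/- Not every choice of one WRD candidate per read yields a some-schedulable happens-before relation: there exists a trace T and a function choosing, for each read event r of T, exactly one candidate c(r) ∈ W(r), such that the relation generated by the PO edges, the RAD edges, and the edges c(r) → r contains a cycle and hence extends to no partial order. Concretely, for T = [thread 2: wr(x) at position 1, thread 1: wr(y) at position 2, thread 1: rd(y) at position 3, thread 1: wr(x) at position 4, thread 2: rd(x) at position 5, thread 2: wr(y) at position 6], choosing c(rd(y)@3) = wr(y)@6 and c(rd(x)@5) = wr(x)@4 produces the cycle wr(x)@4 → rd(x)@5 → wr(y)@6 → rd(y)@3 → wr(x)@4. -/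

import Mathlib

/-- Operations an event can perform: read/write on a shared variable,
    acquire/release on a mutex. Variables and mutexes are named by naturals. -/
inductive Op : Type where
  | read : ℕ → Op
  | write : ℕ → Op
  | acq : ℕ → Op
  | rel : ℕ → Op
deriving DecidableEq

/-- An event carries a thread identifier, a trace position and an operation. -/
structure Event : Type where
  tid : ℕ
  pos : ℕ
  op : Op
deriving DecidableEq

/-- A trace is well formed if the recorded position of each event equals its index. -/
def WellFormed (T : List Event) : Prop :=
  ∀ i : Fin T.length, (T.get i).pos = (i : ℕ)

/-- Program-order edge: same thread, earlier position. -/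
def POEdge (T : List Event) (e f : Event) : Prop :=
  e ∈ T ∧ f ∈ T ∧ e.tid = f.tid ∧ e.pos < f.pos

/-- Release-acquire edge: a release of mutex `y` before an acquire of `y` in another
    thread, with no intervening acquire of `y` by a thread other than the releasing one. -/
def RADEdge (T : List Event) (e f : Event) : Prop :=
  e ∈ T ∧ f ∈ T ∧ ∃ y, e.op = Op.rel y ∧ f.op = Op.acq y ∧
    e.tid ≠ f.tid ∧ e.pos < f.pos ∧
    ∀ g ∈ T, e.pos < g.pos → g.pos < f.pos → g.tid ≠ e.tid → g.op ≠ Op.acq y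

/-- The happens-before relation: smallest (strict) partial order containing PO and RAD,
    i.e. the transitive closure of the PO and RAD edges. -/
def HB (T : List Event) : Event → Event → Prop :=
  Relation.TransGen (fun e f => POEdge T e f ∨ RADEdge T e f)

/-- Two events are unsynchronized if neither happens before the other. -/
def Unsync (T : List Event) (e f : Event) : Prop := ¬ HB T e f ∧ ¬ HB T f e

/-- Unsynchronized WRD candidates for the read `r` on variable `x`. -/
def W1 (T : List Event) (x : ℕ) (r : Event) : Set Event :=
  {w | w ∈ T ∧ w.op = Op.write x ∧ Unsync T r w ∧
    ∀ w' ∈ T, w' ≠ w → w'.op = Op.write x → Unsync T r w' → ¬ HB T w w'}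

/-- Synchronized WRD candidates for the read `r` on variable `x`. -/
def W2 (T : List Event) (x : ℕ) (r : Event) : Set Event :=
  {w | w ∈ T ∧ w.op = Op.write x ∧ HB T w r ∧
    ∀ w' ∈ T, w' ≠ w → w'.op = Op.write x → HB T w' r → ¬ HB T w w'}

/-- All WRD candidates. -/
def Wcand (T : List Event) (x : ℕ) (r : Event) : Set Event :=
  W1 T x r ∪ W2 T x r

/-- Write-read dependency edge: the nearest preceding write on the same variable. -/
def WRDEdge (T : List Event) (w r : Event) : Prop :=
  w ∈ T ∧ r ∈ T ∧ ∃ x, w.op = Op.write x ∧ r.op = Op.read x ∧ w.pos < r.pos ∧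
    ∀ g ∈ T, w.pos < g.pos → g.pos < r.pos → g.op ≠ Op.write x

/-- The schedulable happens-before relation: smallest partial order containing
    PO, RAD and WRD edges. -/
def SHB (T : List Event) : Event → Event → Prop :=
  Relation.TransGen (fun e f => POEdge T e f ∨ RADEdge T e f ∨ WRDEdge T e f)

/-- Every read event enjoys an initial write. -/
def InitialWrites (T : List Event) : Prop :=
  ∀ r ∈ T, ∀ x, r.op = Op.read x → (W2 T x r).Nonempty

/-- A some-schedulable happens-before relation: any (strict) partial order satisfying
    PO and RAD such that every read is preceded by some of its WRD candidates. -/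
structure SomeSHB (T : List Event) (R : Event → Event → Prop) : Prop where
  trans : ∀ {a b c : Event}, R a b → R b c → R a c
  irrefl : ∀ a : Event, ¬ R a a
  po : ∀ {e f : Event}, POEdge T e f → R e f
  rad : ∀ {e f : Event}, RADEdge T e f → R e f
  wrd : ∀ r ∈ T, ∀ x, r.op = Op.read x → ∃ w ∈ Wcand T x r, R w r

/-- A WRD-candidate edge of the graph derived from `T` (labelled `W(r)`). -/
def CandEdge (T : List Event) (w r : Event) : Prop :=
  r ∈ T ∧ ∃ x, r.op = Op.read x ∧ w ∈ Wcand T x r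

/-- An edge of the graph derived from `T`: an HB edge or a WRD-candidate edge. -/
def GEdge (T : List Event) (e f : Event) : Prop :=
  HB T e f ∨ CandEdge T e f

/-- A path in the graph derived from `T`: a nonempty sequence of edges
    visiting pairwise distinct nodes. -/
def GPath (T : List Event) (e f : Event) : Prop :=
  ∃ (n : ℕ) (p : Fin (n + 1) → Event), 0 < n ∧ Function.Injective p ∧
    p 0 = e ∧ p (Fin.last n) = f ∧
    ∀ i : Fin n, GEdge T (p i.castSucc) (p i.succ)

/-!
Without locks there are no RAD edges, so happens-before is just program order. Each chosen
write then lies in the other thread than its read, hence is unsynchronized with it, and it is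
the only write on its variable with that property: both choices are `W1`-candidates. With
positions counted from 0, the choice edges `wr(x)@3 → rd(x)@4` and `wr(y)@5 → rd(y)@2` close
a cycle with the program-order edges `rd(x)@4 → wr(y)@5` and `rd(y)@2 → wr(x)@3`, and a
strict order containing a cycle would be reflexive somewhere.
-/

def LockFree (T : List Event) : Prop :=
  ∀ e ∈ T, ∀ y, e.op ≠ Op.rel y

theorem POEdge.trans {T : List Event} {e f g : Event} (hef : POEdge T e f)
    (hfg : POEdge T f g) : POEdge T e g :=
  ⟨hef.1, hfg.2.1, hef.2.2.1.trans hfg.2.2.1, hef.2.2.2.trans hfg.2.2.2⟩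

namespace LockFree

variable {T : List Event}

theorem not_radEdge (hT : LockFree T) (e f : Event) : ¬ RADEdge T e f :=
  fun ⟨he, _, y, hrel, _⟩ => hT e he y hrel

theorem hb_iff_poEdge (hT : LockFree T) {e f : Event} : HB T e f ↔ POEdge T e f := by
  refine ⟨fun h => ?_, fun h => .single (Or.inl h)⟩
  induction h with
  | single h => exact h.resolve_right (hT.not_radEdge _ _)
  | tail _ hfg ih => exact ih.trans (hfg.resolve_right (hT.not_radEdge _ _))

end LockFree

def ChoiceEdge (T : List Event) (c : Event → Event) (u v : Event) : Prop :=
  POEdge T u v ∨ RADEdge T u v ∨ (v ∈ T ∧ (∃ x, v.op = Op.read x) ∧ u = c v)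

theorem not_exists_strictOrder_of_transGen_cycle {α : Type*} {r : α → α → Prop} {a : α}
    (hcycle : Relation.TransGen r a a) :
    ¬ ∃ R : α → α → Prop, (∀ a b c, R a b → R b c → R a c) ∧ (∀ a, ¬ R a a) ∧
      (∀ a b, r a b → R a b) := by
  rintro ⟨R, htrans, hirrefl, hle⟩
  have : IsTrans α R := ⟨htrans⟩
  exact hirrefl a (Relation.transGen_minimal hle a a hcycle)

namespace CycleExample

def trace : List Event :=
  [⟨2, 0, Op.write 0⟩, ⟨1, 1, Op.write 1⟩, ⟨1, 2, Op.read 1⟩,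
   ⟨1, 3, Op.write 0⟩, ⟨2, 4, Op.read 0⟩, ⟨2, 5, Op.write 1⟩]

def choice (e : Event) : Event :=
  if e = ⟨1, 2, Op.read 1⟩ then ⟨2, 5, Op.write 1⟩
  else if e = ⟨2, 4, Op.read 0⟩ then ⟨1, 3, Op.write 0⟩ else e

theorem wellFormed : WellFormed trace := by
  unfold WellFormed
  decide

theorem lockFree : LockFree trace := by
  simp [LockFree, trace]

theorem choice_mem_wcand :
    ∀ r ∈ trace, ∀ x, r.op = Op.read x → choice r ∈ Wcand trace x r := by
  intro r hr x hx
  fin_cases hr <;> cases hx <;> refine Or.inl ⟨by decide, by decide, ?_, ?_⟩ <;>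
    simp only [Unsync, lockFree.hb_iff_poEdge, POEdge] <;> decide

theorem choiceEdge_cycle :
    Relation.TransGen (ChoiceEdge trace choice) ⟨1, 3, Op.write 0⟩ ⟨1, 3, Op.write 0⟩ := by
  have wrX_rdX : ChoiceEdge trace choice ⟨1, 3, Op.write 0⟩ ⟨2, 4, Op.read 0⟩ :=
    .inr (.inr ⟨by decide, ⟨0, rfl⟩, by decide⟩)
  have rdX_wrY : ChoiceEdge trace choice ⟨2, 4, Op.read 0⟩ ⟨2, 5, Op.write 1⟩ :=
    .inl ⟨by decide, by decide, rfl, by decide⟩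
  have wrY_rdY : ChoiceEdge trace choice ⟨2, 5, Op.write 1⟩ ⟨1, 2, Op.read 1⟩ :=
    .inr (.inr ⟨by decide, ⟨1, rfl⟩, by decide⟩)
  have rdY_wrX : ChoiceEdge trace choice ⟨1, 2, Op.read 1⟩ ⟨1, 3, Op.write 0⟩ :=
    .inl ⟨by decide, by decide, rfl, by decide⟩
  exact .head wrX_rdX <| .head rdX_wrY <| .head wrY_rdY <| .single rdY_wrX

end CycleExample

open CycleExample in
/-- not every choice of one WRD candidate per read yields a
    some-schedulable happens-before relation: for the concrete trace
    `[2:wr(x), 1:wr(y), 1:rd(y), 1:wr(x), 2:rd(x), 2:wr(y)]` (with `x = 0`, `y = 1`)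
    the choice `c(rd y) = wr(y)@5`, `c(rd x) = wr(x)@3` is a choice of WRD candidates
    whose generated relation contains a cycle, hence extends to no partial order. -/
theorem stmt13 :
    ∃ T : List Event,
      T = [⟨2, 0, Op.write 0⟩, ⟨1, 1, Op.write 1⟩, ⟨1, 2, Op.read 1⟩,
           ⟨1, 3, Op.write 0⟩, ⟨2, 4, Op.read 0⟩, ⟨2, 5, Op.write 1⟩] ∧
      WellFormed T ∧
      ∃ c : Event → Event,
        (∀ r ∈ T, ∀ x, r.op = Op.read x → c r ∈ Wcand T x r) ∧
        c ⟨1, 2, Op.read 1⟩ = ⟨2, 5, Op.write 1⟩ ∧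
        c ⟨2, 4, Op.read 0⟩ = ⟨1, 3, Op.write 0⟩ ∧
        (∃ a : Event, Relation.TransGen
            (fun u v => POEdge T u v ∨ RADEdge T u v ∨
              (v ∈ T ∧ (∃ x, v.op = Op.read x) ∧ u = c v)) a a) ∧
        ¬ ∃ R : Event → Event → Prop,
            (∀ a b c' : Event, R a b → R b c' → R a c') ∧
            (∀ a : Event, ¬ R a a) ∧
            (∀ u v : Event, (POEdge T u v ∨ RADEdge T u v ∨
              (v ∈ T ∧ (∃ x, v.op = Op.read x) ∧ u = c v)) → R u v) :=
  ⟨trace, rfl, wellFormed, choice, choice_mem_wcand, by decide, by decide,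
    ⟨_, choiceEdge_cycle⟩, not_exists_strictOrder_of_transGen_cycle choiceEdge_cycle⟩
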